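/- Let E be a finite-dimensional vector space over ℚ, let Δ be a finite subset of E with 0 ∉ Δ and Δ ∩ (−Δ) = ∅, set ρ₁ = (1/2)·Σ_{α∈Δ} α, and for a subset Z ⊆ Δ define integers K_Z(γ) for γ ∈ E by the expansion ∏_{α∈Δ∖Z} (1 + e^{−α}) = Σ_{γ∈E} K_Z(γ) e^{−γ} in the group algebra ℤ[E]. Let w be a linear automorphism of E with w(Δ ∪ (−Δ)) = Δ ∪ (−Δ) and let Z ⊆ Δ satisfy w(Z) ⊆ Δ. Then for every γ ∈ E, K_{wZ}(ρ₁ − w(ρ₁ − γ)) = K_Z(γ). -/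

import Mathlib

open Finset AddMonoidAlgebra

/-!
Multiplying `∏_{α ∈ Δ∖Z} (1 + e^{-α})` by `e^{ρ_{Δ∖Z}}` (half the sum of `Δ∖Z`) gives
`∏_{α ∈ Δ∖Z} (e^{α/2} + e^{-α/2})`, whose factors are invariant under `α ↦ -α`. As `w` maps `Δ`
into `Δ ∪ -Δ`, the map `α ↦ ±wα` (sign chosen to land in `Δ`) is a bijection `Δ∖Z → Δ∖wZ`, so
`w` carries the symmetrised product for `Z` to the one for `wZ`. Comparing the prefactors gives
`w (∏_{Δ∖Z} (1 + e^{-α})) = e^{ρ₁ - wρ₁} ∏_{Δ∖wZ} (1 + e^{-α})`, and the claim is the equality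
of the coefficients of `e^{-wγ}`.
-/

section HalfExponentials

variable (k : Type*) [CommSemiring k] {E : Type*} [AddCommGroup E] [Module ℚ E]

/-- `e^{x/2} + e^{-x/2}` -/
noncomputable def symmFactor (x : E) : k[E] :=
  single ((1 / 2 : ℚ) • x) 1 + single (-((1 / 2 : ℚ) • x)) 1

variable {k}

lemma symmFactor_neg (x : E) : symmFactor k (-x) = symmFactor k x := by
  simp only [symmFactor, smul_neg, neg_neg, add_comm]

lemma symmFactor_eq_single_mul (x : E) :
    symmFactor k x = single ((1 / 2 : ℚ) • x) 1 * (1 + single (-x) 1) := by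
  have hx : (1 / 2 : ℚ) • x + -x = -((1 / 2 : ℚ) • x) := by module
  rw [symmFactor, mul_add, mul_one, single_mul_single, hx, mul_one]

lemma prod_symmFactor (s : Finset E) :
    ∏ α ∈ s, symmFactor k α =
      single ((1 / 2 : ℚ) • ∑ α ∈ s, α) 1 * ∏ α ∈ s, (1 + single (-α) (1 : k)) := by
  simp_rw [symmFactor_eq_single_mul, prod_mul_distrib, prod_single, smul_sum, prod_const_one]

lemma mapDomainRingHom_symmFactor {F : Type*} [FunLike F E E] [LinearMapClass F ℚ E E] (w : F)
    (x : E) :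
    mapDomainRingHom k (w : E →+ E) (symmFactor k x) = symmFactor k (w x) := by
  rw [symmFactor, symmFactor, map_add, mapDomainRingHom_apply, mapDomainRingHom_apply,
    mapDomain_single, mapDomain_single]
  simp

end HalfExponentials

section SignRepresentative

variable {E : Type*} [AddCommGroup E] {Δ Z : Finset E}

lemma neg_notMem_of_mem (hΔ : Disjoint (Δ : Set E) (-Δ)) {x : E} (hx : x ∈ Δ) : -x ∉ Δ :=
  fun hnx ↦ hΔ.notMem_of_mem_left (a := x) hx (by simpa using hnx)

variable [DecidableEq E]

/-- The one of `x`, `-x` that lies in `Δ`, when `x ∈ Δ ∪ -Δ`. -/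
def posRep (Δ : Finset E) (x : E) : E := if x ∈ Δ then x else -x

lemma posRep_eq_or_eq_neg (x : E) : posRep Δ x = x ∨ posRep Δ x = -x := by
  unfold posRep; split_ifs <;> simp

lemma posRep_of_mem {x : E} (hx : x ∈ Δ) : posRep Δ x = x := if_pos hx

lemma posRep_mem {x : E} (hx : x ∈ (Δ : Set E) ∪ -Δ) : posRep Δ x ∈ Δ := by
  unfold posRep
  split_ifs with h
  · exact h
  · simpa [h] using hx

lemma injOn_posRep_comp (hΔ : Disjoint (Δ : Set E) (-Δ)) (w : E ≃+ E) :
    Set.InjOn (posRep Δ ∘ w) Δ := by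
  intro a ha b hb hab
  have key : w a = w b ∨ w a = -w b := by
    rcases posRep_eq_or_eq_neg (Δ := Δ) (w a) with h₁ | h₁ <;>
    rcases posRep_eq_or_eq_neg (Δ := Δ) (w b) with h₂ | h₂ <;>
    simp only [Function.comp_apply, h₁, h₂, neg_eq_iff_eq_neg] at hab <;>
    simp [hab]
  rw [← map_neg, w.injective.eq_iff, w.injective.eq_iff] at key
  rcases key with rfl | rfl
  · rfl
  · exact absurd ha (neg_notMem_of_mem hΔ hb)

lemma image_posRep_comp_sdiff (hΔ : Disjoint (Δ : Set E) (-Δ)) (w : E ≃+ E)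
    (hw : Set.MapsTo w Δ ((Δ : Set E) ∪ -Δ)) (hZ : Z ⊆ Δ) (hwZ : Z.image w ⊆ Δ) :
    (Δ \ Z).image (posRep Δ ∘ w) = Δ \ Z.image w := by
  have hinj := injOn_posRep_comp hΔ w
  refine eq_of_subset_of_card_le ?_ ?_
  · intro β hβ
    obtain ⟨α, hα, rfl⟩ := mem_image.1 hβ
    rw [mem_sdiff] at hα ⊢
    refine ⟨posRep_mem (hw hα.1), fun hmem ↦ hα.2 ?_⟩
    obtain ⟨ζ, hζ, hζα⟩ := mem_image.1 hmem
    have : (posRep Δ ∘ w) ζ = (posRep Δ ∘ w) α := by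
      simpa [posRep_of_mem (hwZ (mem_image_of_mem w hζ))] using hζα
    rwa [← hinj (hZ hζ) hα.1 this]
  · rw [card_image_of_injOn (hinj.mono (by simp)), card_sdiff_of_subset hZ,
      card_sdiff_of_subset hwZ, card_image_of_injective _ w.injective]

lemma prod_comp_sdiff_eq_prod_sdiff_image {M : Type*} [CommMonoid M] {f : E → M}
    (hf : ∀ x, f (-x) = f x) (hΔ : Disjoint (Δ : Set E) (-Δ)) (w : E ≃+ E)
    (hw : Set.MapsTo w Δ ((Δ : Set E) ∪ -Δ)) (hZ : Z ⊆ Δ) (hwZ : Z.image w ⊆ Δ) :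
    ∏ α ∈ Δ \ Z, f (w α) = ∏ β ∈ Δ \ Z.image w, f β := by
  rw [← image_posRep_comp_sdiff hΔ w hw hZ hwZ,
    prod_image ((injOn_posRep_comp hΔ w).mono (by simp))]
  refine prod_congr rfl fun α _ ↦ ?_
  rcases posRep_eq_or_eq_neg (Δ := Δ) (w α) with h | h <;> simp [h, hf]

end SignRepresentative

section Expansion

variable {k : Type*} [CommSemiring k] {E : Type*} [AddCommGroup E] [Module ℚ E] [DecidableEq E]

lemma mapDomainRingHom_prod_one_add_single_neg {Δ Z : Finset E}
    (hΔ : Disjoint (Δ : Set E) (-Δ)) (w : E ≃ₗ[ℚ] E) (hw : Set.MapsTo w Δ ((Δ : Set E) ∪ -Δ))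
    (hZ : Z ⊆ Δ) (hwZ : Z.image w ⊆ Δ) :
    mapDomainRingHom k (w : E →+ E) (∏ α ∈ Δ \ Z, (1 + single (-α) 1)) =
      single ((1 / 2 : ℚ) • ∑ α ∈ Δ, α - w ((1 / 2 : ℚ) • ∑ α ∈ Δ, α)) 1 *
        ∏ α ∈ Δ \ Z.image w, (1 + single (-α) 1) := by
  have hsymm : mapDomainRingHom k (w : E →+ E) (∏ α ∈ Δ \ Z, symmFactor k α) =
      ∏ β ∈ Δ \ Z.image w, symmFactor k β := by
    rw [map_prod]
    simp only [mapDomainRingHom_symmFactor]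
    exact prod_comp_sdiff_eq_prod_sdiff_image symmFactor_neg hΔ w.toAddEquiv hw hZ hwZ
  rw [prod_symmFactor, prod_symmFactor, map_mul, mapDomainRingHom_apply, mapDomain_single,
    AddMonoidHom.coe_coe] at hsymm
  have hshift : (1 / 2 : ℚ) • ∑ α ∈ Δ \ Z.image w, α - w ((1 / 2 : ℚ) • ∑ α ∈ Δ \ Z, α) =
      (1 / 2 : ℚ) • ∑ α ∈ Δ, α - w ((1 / 2 : ℚ) • ∑ α ∈ Δ, α) := by
    rw [sum_sdiff_eq_sub hZ, sum_sdiff_eq_sub hwZ, sum_image (w.injective.injOn), ← map_sum]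
    simp only [map_smul, map_sub]
    module
  set a := w ((1 / 2 : ℚ) • ∑ α ∈ Δ \ Z, α)
  calc mapDomainRingHom k (w : E →+ E) (∏ α ∈ Δ \ Z, (1 + single (-α) 1))
      = single (-a) 1 * (single a 1 * mapDomainRingHom k (w : E →+ E)
          (∏ α ∈ Δ \ Z, (1 + single (-α) 1))) := by
        rw [← mul_assoc, single_mul_single, neg_add_cancel, mul_one, ← one_def, one_mul]
    _ = _ := by
        rw [hsymm, ← mul_assoc, single_mul_single, mul_one, neg_add_eq_sub, hshift]

lemma coeff_finsuppSum_single_apply {R M ι : Type*} [Semiring R] {f : ι → M}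
    (hf : Function.Injective f) (K : ι →₀ R) (i : ι) :
    (K.sum fun j c ↦ single (f j) c).coeff (f i) = K i := by
  simp only [coeff_finsuppSum, coeff_single]
  exact Finsupp.mapDomain_apply hf K i

end Expansion

theorem K_wZ_star_eq_K_Z_general
    {E : Type*} [AddCommGroup E] [Module ℚ E] [DecidableEq E]
    (Δ : Finset E) (hΔ : (↑Δ : Set E) ∩ (-(↑Δ : Set E)) = ∅)
    (ρ₁ : E) (hρ₁ : ρ₁ = (1 / 2 : ℚ) • ∑ α ∈ Δ, α)
    (w : E ≃ₗ[ℚ] E)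
    (hw : w '' ((↑Δ : Set E) ∪ (-(↑Δ : Set E))) = (↑Δ : Set E) ∪ (-(↑Δ : Set E)))
    (Z : Finset E) (hZ : Z ⊆ Δ) (hwZ : Z.image w ⊆ Δ)
    (KZ KwZ : E →₀ ℤ)
    (hKZ : (∏ α ∈ Δ \ Z, (1 + AddMonoidAlgebra.single (-α) (1 : ℤ))) =
      KZ.sum fun γ c => AddMonoidAlgebra.single (-γ) c)
    (hKwZ : (∏ α ∈ Δ \ Z.image w, (1 + AddMonoidAlgebra.single (-α) (1 : ℤ))) =
      KwZ.sum fun γ c => AddMonoidAlgebra.single (-γ) c) :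
    ∀ γ : E, KwZ (ρ₁ - w (ρ₁ - γ)) = KZ γ := by
  intro γ
  have hw' : Set.MapsTo w Δ ((Δ : Set E) ∪ -Δ) :=
    hw ▸ (Set.mapsTo_image w _).mono_left Set.subset_union_left
  have key := congrArg (·.coeff (w (-γ)))
    (mapDomainRingHom_prod_one_add_single_neg (k := ℤ)
      (Set.disjoint_iff_inter_eq_empty.2 hΔ) w hw' hZ hwZ)
  rw [hKZ, hKwZ, ← hρ₁, map_finsuppSum] at key
  simp only [mapDomainRingHom_apply, mapDomain_single, AddMonoidHom.coe_coe,
    coeff_single_mul_apply, one_mul] at key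
  have harg : -(ρ₁ - w ρ₁) + w (-γ) = -(ρ₁ - w (ρ₁ - γ)) := by
    simp only [map_neg, map_sub]; abel
  rwa [harg, coeff_finsuppSum_single_apply neg_injective,
    coeff_finsuppSum_single_apply (f := fun x ↦ w (-x)) (w.injective.comp neg_injective),
    eq_comm] at key

/-- Let `Δ` be a finite subset of a finite-dimensional `ℚ`-vector space `E` with `0 ∉ Δ` and
`Δ ∩ (−Δ) = ∅`, let `ρ₁` be half the sum of the elements of `Δ`, and for `Z ⊆ Δ` let
`K_Z : E → ℤ` (finitely supported) be defined by the expansion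
`∏_{α ∈ Δ∖Z} (1 + e^{−α}) = Σ_γ K_Z(γ) e^{−γ}` in the group algebra `ℤ[E]`.  If `w` is a
linear automorphism of `E` preserving `Δ ∪ (−Δ)` and `w(Z) ⊆ Δ`, then for every `γ ∈ E`,
`K_{wZ}(ρ₁ − w(ρ₁ − γ)) = K_Z(γ)`. -/
theorem K_wZ_star_eq_K_Z
    {E : Type*} [AddCommGroup E] [Module ℚ E] [FiniteDimensional ℚ E] [DecidableEq E]
    (Δ : Finset E) (hΔ0 : (0 : E) ∉ Δ) (hΔ : (↑Δ : Set E) ∩ (-(↑Δ : Set E)) = ∅)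
    (ρ₁ : E) (hρ₁ : ρ₁ = (1 / 2 : ℚ) • ∑ α ∈ Δ, α)
    (w : E ≃ₗ[ℚ] E)
    (hw : w '' ((↑Δ : Set E) ∪ (-(↑Δ : Set E))) = (↑Δ : Set E) ∪ (-(↑Δ : Set E)))
    (Z : Finset E) (hZ : Z ⊆ Δ) (hwZ : Z.image w ⊆ Δ)
    (KZ KwZ : E →₀ ℤ)
    (hKZ : (∏ α ∈ Δ \ Z, (1 + AddMonoidAlgebra.single (-α) (1 : ℤ))) =
      KZ.sum fun γ c => AddMonoidAlgebra.single (-γ) c)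
    (hKwZ : (∏ α ∈ Δ \ Z.image w, (1 + AddMonoidAlgebra.single (-α) (1 : ℤ))) =
      KwZ.sum fun γ c => AddMonoidAlgebra.single (-γ) c) :
    ∀ γ : E, KwZ (ρ₁ - w (ρ₁ - γ)) = KZ γ :=
  K_wZ_star_eq_K_Z_general Δ hΔ ρ₁ hρ₁ w hw Z hZ hwZ KZ KwZ hKZ hKwZ
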